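/- arXiv:2203.13960 — 2 statements merged into one kernel-verified Lean document; each statement's English description precedes it below -/
import Mathlib

section
/- Let a, b, f, k, l, g : ℝ → ℝ and Φ : ℝ → ℝ with Φ' ≠ 0 everywhere, a ≠ 0 everywhere, and p(t) := k(t)a(Φ(t))Φ''(t) + k(t)b(Φ(t))(Φ'(t))² − l(t)a(Φ(t))Φ'(t) ≠ 0 everywhere. Let u, v : Ω ⊆ ℝⁿ → ℝ be smooth with ∂u/∂xₙ > 0, ∂v/∂xₙ > 0, u = Φ(v), satisfying a(u)Δu + b(u)|∇u|² = f(u) and k(v)Δv + l(v)|∇v|² = g(v). Then |∇v|² = G(v) where G(t) = (k(t)f(Φ(t)) − g(t)a(Φ(t))Φ'(t))/p(t), and the field F_i = (∂u/∂x_i)/(∂u/∂xₙ), i=1,…,n−1, satisfies the pressureless Euler equations ∂F_i/∂xₙ + Σ_{j=1}^{n−1} F_j ∂F_i/∂x_j = 0. -/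
noncomputable def pd {n : ℕ} (i : Fin n) (f : (Fin n → ℝ) → ℝ) (x : Fin n → ℝ) : ℝ :=
  fderiv ℝ f x (Pi.single i 1)

noncomputable def lap {n : ℕ} (f : (Fin n → ℝ) → ℝ) (x : Fin n → ℝ) : ℝ :=
  ∑ j, pd j (pd j f) x

section aux
variable {n : ℕ}

lemma clm_apply_eq (L : ℝ →L[ℝ] ℝ) (r : ℝ) : L r = r * L 1 := by
  rw [← smul_eq_mul, ← L.map_smul, smul_eq_mul, mul_one]

lemma pd_contDiff (i : Fin n) {f : (Fin n → ℝ) → ℝ} (hf : ContDiff ℝ (⊤ : ℕ∞) f) :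
    ContDiff ℝ (⊤ : ℕ∞) (pd i f) :=
  (hf.fderiv_right (by simp)).clm_apply contDiff_const

lemma pd_comp (i : Fin n) {Φ : ℝ → ℝ} {v : (Fin n → ℝ) → ℝ} {x : Fin n → ℝ}
    (hΦ : DifferentiableAt ℝ Φ (v x)) (hv : DifferentiableAt ℝ v x) :
    pd i (fun y => Φ (v y)) x = deriv Φ (v x) * pd i v x := by
  unfold pd
  rw [show (fun y => Φ (v y)) = Φ ∘ v from rfl, fderiv_comp x hΦ hv]
  rw [ContinuousLinearMap.comp_apply, clm_apply_eq, fderiv_apply_one_eq_deriv, mul_comm]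

lemma pd_mul (i : Fin n) {f g : (Fin n → ℝ) → ℝ} {x : Fin n → ℝ}
    (hf : DifferentiableAt ℝ f x) (hg : DifferentiableAt ℝ g x) :
    pd i (fun y => f y * g y) x = pd i f x * g x + f x * pd i g x := by
  unfold pd
  rw [fderiv_fun_mul hf hg]
  simp only [ContinuousLinearMap.add_apply, ContinuousLinearMap.smul_apply, smul_eq_mul]
  ring

lemma pd_div (i : Fin n) {f g : (Fin n → ℝ) → ℝ} {x : Fin n → ℝ}
    (hf : DifferentiableAt ℝ f x) (hg : DifferentiableAt ℝ g x) (hg0 : g x ≠ 0) :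
    pd i (fun y => f y / g y) x = (pd i f x * g x - f x * pd i g x) / g x ^ 2 := by
  have hinv : pd i (fun y => (g y)⁻¹) x = -(g x ^ 2)⁻¹ * pd i g x := by
    rw [show (fun y => (g y)⁻¹) = (fun y => (fun t : ℝ => t⁻¹) (g y)) from rfl,
      pd_comp i (differentiableAt_inv hg0) hg, deriv_inv]
  have : (fun y => f y / g y) = fun y => f y * (g y)⁻¹ := by
    funext y; rw [div_eq_mul_inv]
  rw [this, pd_mul i (g := fun y => (g y)⁻¹) hf (hg.inv hg0), hinv]
  field_simp
  ring

lemma pd_sum (i : Fin n) {ι : Type*} (s : Finset ι) {f : ι → (Fin n → ℝ) → ℝ} {x : Fin n → ℝ}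
    (hf : ∀ j ∈ s, DifferentiableAt ℝ (f j) x) :
    pd i (fun y => ∑ j ∈ s, f j y) x = ∑ j ∈ s, pd i (f j) x := by
  unfold pd
  rw [fderiv_fun_sum hf]
  simp

lemma pd_symm {v : (Fin n → ℝ) → ℝ} (hv : ContDiff ℝ (⊤ : ℕ∞) v) (i j : Fin n) (x : Fin n → ℝ) :
    pd i (pd j v) x = pd j (pd i v) x := by
  have hd : Differentiable ℝ (fderiv ℝ v) := (hv.fderiv_right (m := (⊤ : ℕ∞)) (by simp)).differentiable (by simp)
  have key : ∀ (w : Fin n → ℝ) (z : Fin n → ℝ),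
      fderiv ℝ (fun y => fderiv ℝ v y w) z
        = (fderiv ℝ (fderiv ℝ v) z).flip w := by
    intro w z
    have : (fun y => fderiv ℝ v y w)
        = fun y => (ContinuousLinearMap.apply ℝ ℝ w) (fderiv ℝ v y) := rfl
    rw [this]
    exact ((ContinuousLinearMap.apply ℝ ℝ w).hasFDerivAt.comp z (hd z).hasFDerivAt).fderiv
  unfold pd
  rw [key, key]
  simp only [ContinuousLinearMap.flip_apply]
  exact second_derivative_symmetric (f := v) (fun y => (hv.differentiable (by simp) y).hasFDerivAt)
    (hd x).hasFDerivAt _ _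

lemma pd_congr {f g : (Fin n → ℝ) → ℝ} {Ω : Set (Fin n → ℝ)} (hΩ : IsOpen Ω)
    (h : ∀ x ∈ Ω, f x = g x) {x : Fin n → ℝ} (hx : x ∈ Ω) (i : Fin n) :
    pd i f x = pd i g x := by
  unfold pd
  rw [Filter.EventuallyEq.fderiv_eq (Filter.eventually_iff_exists_mem.2 ⟨Ω, hΩ.mem_nhds hx, h⟩)]

lemma deriv_contDiff {Φ : ℝ → ℝ} (hΦ : ContDiff ℝ (⊤ : ℕ∞) Φ) : ContDiff ℝ (⊤ : ℕ∞) (deriv Φ) := by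
  have : deriv Φ = fun t => fderiv ℝ Φ t 1 := by
    funext t; rw [fderiv_apply_one_eq_deriv]
  rw [this]
  exact (hΦ.fderiv_right (by simp)).clm_apply contDiff_const

end aux

theorem stmt_8 {n : ℕ} (hn : 1 ≤ n) (Ω : Set (Fin (n + 1) → ℝ)) (hΩ : IsOpen Ω)
    (a b f k l g Φ : ℝ → ℝ)
    (ha : ContDiff ℝ (⊤ : ℕ∞) a) (hb : ContDiff ℝ (⊤ : ℕ∞) b) (hf : ContDiff ℝ (⊤ : ℕ∞) f)
    (hk : ContDiff ℝ (⊤ : ℕ∞) k) (hl : ContDiff ℝ (⊤ : ℕ∞) l) (hg : ContDiff ℝ (⊤ : ℕ∞) g)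
    (hΦ : ContDiff ℝ (⊤ : ℕ∞) Φ)
    (hΦ' : ∀ t, deriv Φ t ≠ 0) (ha0 : ∀ t, a t ≠ 0)
    (p : ℝ → ℝ)
    (hp : ∀ t, p t = k t * a (Φ t) * deriv (deriv Φ) t
        + k t * b (Φ t) * (deriv Φ t) ^ 2 - l t * a (Φ t) * deriv Φ t)
    (hp0 : ∀ t, p t ≠ 0)
    (u v : (Fin (n + 1) → ℝ) → ℝ) (hu : ContDiff ℝ (⊤ : ℕ∞) u) (hv : ContDiff ℝ (⊤ : ℕ∞) v)
    (hum : ∀ x ∈ Ω, 0 < pd (Fin.last n) u x)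
    (hvm : ∀ x ∈ Ω, 0 < pd (Fin.last n) v x)
    (huv : ∀ x, u x = Φ (v x))
    (hequ : ∀ x ∈ Ω, a (u x) * lap u x + b (u x) * ∑ j, (pd j u x) ^ 2 = f (u x))
    (heqv : ∀ x ∈ Ω, k (v x) * lap v x + l (v x) * ∑ j, (pd j v x) ^ 2 = g (v x))
    (G : ℝ → ℝ)
    (hG : ∀ t, G t = (k t * f (Φ t) - g t * a (Φ t) * deriv Φ t) / p t)
    (F : Fin n → (Fin (n + 1) → ℝ) → ℝ)
    (hF : ∀ i x, F i x = pd (Fin.castSucc i) u x / pd (Fin.last n) u x) :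
    (∀ x ∈ Ω, ∑ j, (pd j v x) ^ 2 = G (v x)) ∧
    (∀ i : Fin n, ∀ x ∈ Ω,
      pd (Fin.last n) (F i) x
        + ∑ j : Fin n, F j x * pd (Fin.castSucc j) (F i) x = 0) := by
  have hvD : Differentiable ℝ v := hv.differentiable (by simp)
  have hΦD : Differentiable ℝ Φ := hΦ.differentiable (by simp)
  have hΦ'c : ContDiff ℝ (⊤ : ℕ∞) (deriv Φ) := deriv_contDiff hΦ
  have hΦ'D : Differentiable ℝ (deriv Φ) := hΦ'c.differentiable (by simp)
  have hpdv : ∀ j : Fin (n + 1), ContDiff ℝ (⊤ : ℕ∞) (pd j v) := fun j => pd_contDiff j hv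
  have hpdvD : ∀ (j : Fin (n + 1)) (x), DifferentiableAt ℝ (pd j v) x :=
    fun j x => (hpdv j).differentiable (by simp) x
  have hu_eq : u = fun y => Φ (v y) := funext huv
  have pdu : ∀ (j : Fin (n + 1)) (x), pd j u x = deriv Φ (v x) * pd j v x := by
    intro j x; rw [hu_eq, pd_comp j (hΦD (v x)) (hvD x)]
  have lapu : ∀ x, lap u x = deriv Φ (v x) * lap v x
      + deriv (deriv Φ) (v x) * ∑ j, (pd j v x) ^ 2 := by
    intro x
    unfold lap
    have e : ∀ j : Fin (n + 1), pd j (pd j u) x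
        = deriv (deriv Φ) (v x) * (pd j v x) ^ 2 + deriv Φ (v x) * pd j (pd j v) x := by
      intro j
      have h1 : pd j u = fun y => (fun z => deriv Φ (v z)) y * pd j v y := funext (pdu j)
      have hA : DifferentiableAt ℝ (fun z => deriv Φ (v z)) x :=
        ((hΦ'c.comp hv).differentiable (by simp)) x
      rw [h1, pd_mul j hA (hpdvD j x), pd_comp j (hΦ'D (v x)) (hvD x)]
      ring
    rw [Finset.sum_congr rfl (fun j _ => e j), Finset.sum_add_distrib,
      ← Finset.mul_sum, ← Finset.mul_sum]
    ring
  have part1 : ∀ x ∈ Ω, ∑ j, (pd j v x) ^ 2 = G (v x) := by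
    intro x hx
    have e1 := hequ x hx
    have e2 := heqv x hx
    rw [lapu x] at e1
    have hsum : ∑ j, (pd j u x) ^ 2 = (deriv Φ (v x)) ^ 2 * ∑ j, (pd j v x) ^ 2 := by
      rw [Finset.mul_sum]
      exact Finset.sum_congr rfl fun j _ => by rw [pdu]; ring
    rw [hsum, huv x] at e1
    rw [hG (v x), eq_div_iff (hp0 (v x)), hp (v x)]
    linear_combination k (v x) * e1 - a (Φ (v x)) * deriv Φ (v x) * e2
  refine ⟨part1, ?_⟩
  -- smoothness of G
  have hpc : ContDiff ℝ (⊤ : ℕ∞) p := by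
    have : p = fun t => k t * a (Φ t) * deriv (deriv Φ) t
        + k t * b (Φ t) * (deriv Φ t) ^ 2 - l t * a (Φ t) * deriv Φ t := funext hp
    rw [this]
    exact (((hk.mul (ha.comp hΦ)).mul (deriv_contDiff hΦ'c)).add
      ((hk.mul (hb.comp hΦ)).mul (hΦ'c.pow 2))).sub ((hl.mul (ha.comp hΦ)).mul hΦ'c)
  have hGc : ContDiff ℝ (⊤ : ℕ∞) G := by
    have : G = fun t => (k t * f (Φ t) - g t * a (Φ t) * deriv Φ t) / p t := funext hG
    rw [this]
    exact ((hk.mul (hf.comp hΦ)).sub ((hg.mul (ha.comp hΦ)).mul hΦ'c)).div hpc hp0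
  have hGD : Differentiable ℝ G := hGc.differentiable (by simp)
  -- key identity from differentiating part1
  have key : ∀ x ∈ Ω, ∀ m : Fin (n + 1),
      ∑ j, 2 * pd j v x * pd j (pd m v) x = deriv G (v x) * pd m v x := by
    intro x hx m
    have sq_eq : ∀ j : Fin (n + 1),
        pd m (fun y => (pd j v y) ^ 2) x = 2 * pd j v x * pd j (pd m v) x := by
      intro j
      have h2 : (fun y => (pd j v y) ^ 2) = fun y => pd j v y * pd j v y := by
        funext y; ring
      rw [h2, pd_mul m (hpdvD j x) (hpdvD j x), pd_symm hv, pd_symm hv]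
      ring
    calc ∑ j, 2 * pd j v x * pd j (pd m v) x
        = ∑ j : Fin (n + 1), pd m (fun y => (pd j v y) ^ 2) x :=
          (Finset.sum_congr rfl fun j _ => (sq_eq j).symm)
      _ = pd m (fun y => ∑ j, (pd j v y) ^ 2) x :=
          (pd_sum m Finset.univ fun j _ => (hpdvD j x).pow 2).symm
      _ = pd m (fun y => G (v y)) x := pd_congr hΩ part1 hx m
      _ = deriv G (v x) * pd m v x := pd_comp m (hGD (v x)) (hvD x)
  -- F as ratio of v-derivatives
  have hFeq : ∀ i : Fin n,
      F i = fun y => pd (Fin.castSucc i) v y / pd (Fin.last n) v y := by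
    intro i; funext y
    rw [hF i y, pdu, pdu, mul_div_mul_left _ _ (hΦ' (v y))]
  intro i x hx
  have hvn : pd (Fin.last n) v x ≠ 0 := ne_of_gt (hvm x hx)
  have pdF : ∀ m : Fin (n + 1), pd m (F i) x
      = (pd m (pd (Fin.castSucc i) v) x * pd (Fin.last n) v x
          - pd (Fin.castSucc i) v x * pd m (pd (Fin.last n) v) x)
        / (pd (Fin.last n) v x) ^ 2 := by
    intro m
    rw [hFeq i, pd_div m (hpdvD _ x) (hpdvD _ x) hvn]
  have Skey : ∀ m : Fin (n + 1),
      (∑ j : Fin n, pd (Fin.castSucc j) v x * pd (Fin.castSucc j) (pd m v) x)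
        = deriv G (v x) * pd m v x / 2 - pd (Fin.last n) v x * pd (Fin.last n) (pd m v) x := by
    intro m
    have h2 := key x hx m
    rw [Fin.sum_univ_castSucc] at h2
    have hs : ∑ j : Fin n, 2 * pd (Fin.castSucc j) v x * pd (Fin.castSucc j) (pd m v) x
        = 2 * ∑ j : Fin n, pd (Fin.castSucc j) v x * pd (Fin.castSucc j) (pd m v) x := by
      rw [Finset.mul_sum]
      exact Finset.sum_congr rfl fun j _ => by ring
    rw [hs] at h2
    linarith
  have sumEq : ∑ j : Fin n, F j x * pd (Fin.castSucc j) (F i) x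
      = (pd (Fin.last n) v x
            * ∑ j : Fin n, pd (Fin.castSucc j) v x
                * pd (Fin.castSucc j) (pd (Fin.castSucc i) v) x
          - pd (Fin.castSucc i) v x
            * ∑ j : Fin n, pd (Fin.castSucc j) v x
                * pd (Fin.castSucc j) (pd (Fin.last n) v) x)
        / (pd (Fin.last n) v x) ^ 3 := by
    have termeq : ∀ j : Fin n, F j x * pd (Fin.castSucc j) (F i) x
        = (pd (Fin.last n) v x
              * (pd (Fin.castSucc j) v x * pd (Fin.castSucc j) (pd (Fin.castSucc i) v) x)
            - pd (Fin.castSucc i) v x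
              * (pd (Fin.castSucc j) v x * pd (Fin.castSucc j) (pd (Fin.last n) v) x))
          / (pd (Fin.last n) v x) ^ 3 := by
      intro j
      have hFjx : F j x = pd (Fin.castSucc j) v x / pd (Fin.last n) v x := by rw [hFeq j]
      rw [pdF (Fin.castSucc j), hFjx]
      field_simp
    rw [Finset.sum_congr rfl fun j _ => termeq j, ← Finset.sum_div,
      Finset.sum_sub_distrib, ← Finset.mul_sum, ← Finset.mul_sum]
  rw [pdF (Fin.last n), sumEq, Skey (Fin.castSucc i), Skey (Fin.last n)]
  field_simp
  ring
end

section
/- Let σ : ℝ² → ℝ be smooth and suppose c₁σ_{xy} = c₂(σ_{xx} − σ_{yy}) for constants c₁, c₂ with c₂ ≠ 0, and let c = (c₁ + √(c₁² + 4c₂²))/(2c₂). Then σ satisfies (σ_{xx} − σ_{yy})Δσ_{xy} = σ_{xy}Δ(σ_{xx} − σ_{yy}); moreover any function of the form σ(x,y) = F(cx + y) + G(x − cy), with F, G : ℝ → ℝ smooth, satisfies c₁σ_{xy} = c₂(σ_{xx} − σ_{yy}). -/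
lemma contDiff_pd {n : ℕ} (i : Fin n) (f : (Fin n → ℝ) → ℝ) (hf : ContDiff ℝ (⊤ : ℕ∞) f) :
    ContDiff ℝ (⊤ : ℕ∞) (pd i f) :=
  (hf.fderiv_right (by simp)).clm_apply contDiff_const

lemma pd_add {n : ℕ} (i : Fin n) (f g : (Fin n → ℝ) → ℝ) (x : Fin n → ℝ)
    (hf : DifferentiableAt ℝ f x) (hg : DifferentiableAt ℝ g x) :
    pd i (fun y => f y + g y) x = pd i f x + pd i g x := by
  simp [pd, fderiv_fun_add hf hg]

lemma pd_const_mul {n : ℕ} (i : Fin n) (k : ℝ) (f : (Fin n → ℝ) → ℝ) (x : Fin n → ℝ)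
    (hf : DifferentiableAt ℝ f x) :
    pd i (fun y => k * f y) x = k * pd i f x := by
  simp [pd, fderiv_const_mul hf k]

lemma hasFDerivAt_affine (H : ℝ → ℝ) (hH : Differentiable ℝ H) (a b : ℝ) (x : Fin 2 → ℝ) :
    HasFDerivAt (fun y : Fin 2 → ℝ => H (a * y 0 + b * y 1))
      (deriv H (a * x 0 + b * x 1) •
        (a • (ContinuousLinearMap.proj 0 : (Fin 2 → ℝ) →L[ℝ] ℝ) + b • ContinuousLinearMap.proj 1)) x := by
  set L : (Fin 2 → ℝ) →L[ℝ] ℝ := a • ContinuousLinearMap.proj 0 + b • ContinuousLinearMap.proj 1 with hL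
  have hl : HasFDerivAt (fun y : Fin 2 → ℝ => a * y 0 + b * y 1) L x := by
    have : ⇑L = fun y : Fin 2 → ℝ => a * y 0 + b * y 1 := by
      ext y; simp [hL]
    simpa [this] using L.hasFDerivAt
  exact ((hH _).hasDerivAt.comp_hasFDerivAt x hl)

lemma pd_affine (H : ℝ → ℝ) (hH : Differentiable ℝ H) (a b : ℝ)
    (l : (Fin 2 → ℝ) → ℝ) (hl : ∀ y, l y = a * y 0 + b * y 1) (i : Fin 2) (x : Fin 2 → ℝ) :
    pd i (fun y => H (l y)) x
      = (a * (Pi.single i 1 : Fin 2 → ℝ) 0 + b * (Pi.single i 1 : Fin 2 → ℝ) 1)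
          * deriv H (a * x 0 + b * x 1) := by
  have hfun : (fun y => H (l y)) = fun y : Fin 2 → ℝ => H (a * y 0 + b * y 1) := by
    funext y; rw [hl]
  rw [pd, hfun, (hasFDerivAt_affine H hH a b x).fderiv]
  simp [smul_smul]
  ring

lemma diff_affine (H : ℝ → ℝ) (hH : Differentiable ℝ H) (a b : ℝ)
    (l : (Fin 2 → ℝ) → ℝ) (hl : ∀ y, l y = a * y 0 + b * y 1) (x : Fin 2 → ℝ) :
    DifferentiableAt ℝ (fun y => H (l y)) x := by
  have hfun : (fun y => H (l y)) = fun y : Fin 2 → ℝ => H (a * y 0 + b * y 1) := by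
    funext y; rw [hl]
  rw [hfun]
  exact (hasFDerivAt_affine H hH a b x).differentiableAt

/-- second derivatives of a sum of two affine compositions -/
lemma pd_pd_two (F G : ℝ → ℝ) (hF : ContDiff ℝ (⊤ : ℕ∞) F) (hG : ContDiff ℝ (⊤ : ℕ∞) G)
    (a b a' b' : ℝ) (l l' : (Fin 2 → ℝ) → ℝ)
    (hl : ∀ y, l y = a * y 0 + b * y 1) (hl' : ∀ y, l' y = a' * y 0 + b' * y 1)
    (i j : Fin 2) (x : Fin 2 → ℝ) :
    pd j (pd i (fun y => F (l y) + G (l' y))) x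
      = ((a * (Pi.single i 1 : Fin 2 → ℝ) 0 + b * (Pi.single i 1 : Fin 2 → ℝ) 1)
          * ((a * (Pi.single j 1 : Fin 2 → ℝ) 0 + b * (Pi.single j 1 : Fin 2 → ℝ) 1)
            * deriv (deriv F) (a * x 0 + b * x 1)))
        + ((a' * (Pi.single i 1 : Fin 2 → ℝ) 0 + b' * (Pi.single i 1 : Fin 2 → ℝ) 1)
          * ((a' * (Pi.single j 1 : Fin 2 → ℝ) 0 + b' * (Pi.single j 1 : Fin 2 → ℝ) 1)
            * deriv (deriv G) (a' * x 0 + b' * x 1))) := by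
  have hF1 : Differentiable ℝ F := hF.differentiable (by simp)
  have hG1 : Differentiable ℝ G := hG.differentiable (by simp)
  have hF2 : Differentiable ℝ (deriv F) :=
    ((hF.of_le (by simp)).iterate_deriv 1).differentiable (by simp)
  have hG2 : Differentiable ℝ (deriv G) :=
    ((hG.of_le (by simp)).iterate_deriv 1).differentiable (by simp)
  set eF : ℝ := a * (Pi.single i 1 : Fin 2 → ℝ) 0 + b * (Pi.single i 1 : Fin 2 → ℝ) 1 with heF
  set eG : ℝ := a' * (Pi.single i 1 : Fin 2 → ℝ) 0 + b' * (Pi.single i 1 : Fin 2 → ℝ) 1 with heG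
  have h1 : pd i (fun y => F (l y) + G (l' y))
      = fun y => eF * deriv F (a * y 0 + b * y 1) + eG * deriv G (a' * y 0 + b' * y 1) := by
    funext y
    rw [pd_add i _ _ y (diff_affine F hF1 a b l hl y) (diff_affine G hG1 a' b' l' hl' y),
      pd_affine F hF1 a b l hl i y, pd_affine G hG1 a' b' l' hl' i y]
  rw [h1]
  have h2 : pd j (fun y => eF * deriv F (a * y 0 + b * y 1)
        + eG * deriv G (a' * y 0 + b' * y 1)) x
      = pd j (fun y => eF * deriv F (a * y 0 + b * y 1)) x
        + pd j (fun y => eG * deriv G (a' * y 0 + b' * y 1)) x := by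
    refine pd_add j _ _ x ?_ ?_
    · exact (diff_affine (deriv F) hF2 a b _ (fun y => rfl) x).const_mul eF
    · exact (diff_affine (deriv G) hG2 a' b' _ (fun y => rfl) x).const_mul eG
  rw [h2,
    pd_const_mul j eF _ x (diff_affine (deriv F) hF2 a b _ (fun y => rfl) x),
    pd_const_mul j eG _ x (diff_affine (deriv G) hG2 a' b' _ (fun y => rfl) x),
    pd_affine (deriv F) hF2 a b _ (fun y => rfl) j x,
    pd_affine (deriv G) hG2 a' b' _ (fun y => rfl) j x]

/-- Coordinates on `ℝ²`: `0 = x`, `1 = y`. -/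
theorem stmt_18 (σ : (Fin 2 → ℝ) → ℝ) (hσ : ContDiff ℝ (⊤ : ℕ∞) σ)
    (c₁ c₂ : ℝ) (hc₂ : c₂ ≠ 0)
    (c : ℝ) (hc : c = (c₁ + Real.sqrt (c₁ ^ 2 + 4 * c₂ ^ 2)) / (2 * c₂))
    (hσeq : ∀ x, c₁ * pd 0 (pd 1 σ) x
        = c₂ * (pd 0 (pd 0 σ) x - pd 1 (pd 1 σ) x)) :
    (∀ x, (pd 0 (pd 0 σ) x - pd 1 (pd 1 σ) x)
          * lap (fun y => pd 0 (pd 1 σ) y) x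
        = pd 0 (pd 1 σ) x
          * lap (fun y => pd 0 (pd 0 σ) y - pd 1 (pd 1 σ) y) x) ∧
    (∀ F G : ℝ → ℝ, ContDiff ℝ (⊤ : ℕ∞) F → ContDiff ℝ (⊤ : ℕ∞) G →
      ∀ x, c₁ * pd 0 (pd 1 (fun y : Fin 2 → ℝ => F (c * y 0 + y 1) + G (y 0 - c * y 1))) x
        = c₂ * (pd 0 (pd 0 (fun y : Fin 2 → ℝ => F (c * y 0 + y 1) + G (y 0 - c * y 1))) x
            - pd 1 (pd 1 (fun y : Fin 2 → ℝ => F (c * y 0 + y 1) + G (y 0 - c * y 1))) x)) := by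
  constructor
  · -- Part 1
    intro x
    set g := pd 0 (pd 1 σ) with hgdef
    have hg : ContDiff ℝ (⊤ : ℕ∞) g := contDiff_pd _ _ (contDiff_pd _ _ hσ)
    set k := c₁ / c₂ with hk
    have hh : ∀ y, pd 0 (pd 0 σ) y - pd 1 (pd 1 σ) y = k * g y := by
      intro y
      have := hσeq y
      rw [hk, hgdef]
      field_simp
      linarith
    have hfun : (fun y => pd 0 (pd 0 σ) y - pd 1 (pd 1 σ) y) = fun y => k * g y :=
      funext hh
    have hlap : lap (fun y => k * g y) x = k * lap g x := by
      have hjj : ∀ j : Fin 2, pd j (pd j (fun y => k * g y)) x = k * pd j (pd j g) x := by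
        intro j
        have h1 : pd j (fun y => k * g y) = fun y => k * pd j g y :=
          funext fun y => pd_const_mul j k g y (hg.differentiable (by simp) y)
        rw [h1, pd_const_mul j k _ x ((contDiff_pd j g hg).differentiable (by simp) x)]
      simp only [lap, Fin.sum_univ_two, hjj]
      ring
    rw [hfun, hh x, hlap]
    have : lap (fun y => g y) x = lap g x := rfl
    rw [this]
    ring
  · -- Part 2
    intro F G hF hG x
    have hs : Real.sqrt (c₁ ^ 2 + 4 * c₂ ^ 2) ^ 2 = c₁ ^ 2 + 4 * c₂ ^ 2 :=
      Real.sq_sqrt (by positivity)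
    have hcq : c₂ * c ^ 2 - c₁ * c - c₂ = 0 := by
      rw [hc]
      field_simp
      rw [mul_comm (c₂ ^ 2) 4]
      linear_combination hs
    have hlF : ∀ y : Fin 2 → ℝ, c * y 0 + y 1 = c * y 0 + 1 * y 1 := by intro y; ring
    have hlG : ∀ y : Fin 2 → ℝ, y 0 - c * y 1 = 1 * y 0 + (-c) * y 1 := by intro y; ring
    have h01 := pd_pd_two F G hF hG c 1 1 (-c) _ _ hlF hlG 1 0 x
    have h00 := pd_pd_two F G hF hG c 1 1 (-c) _ _ hlF hlG 0 0 x
    have h11 := pd_pd_two F G hF hG c 1 1 (-c) _ _ hlF hlG 1 1 x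
    simp only [Pi.single_eq_same, Pi.single_eq_of_ne (by decide : (1:Fin 2) ≠ 0),
      Pi.single_eq_of_ne (by decide : (0:Fin 2) ≠ 1)] at h01 h00 h11
    rw [h01, h00, h11]
    linear_combination (deriv (deriv G) (1 * x 0 + -c * x 1) - deriv (deriv F) (c * x 0 + 1 * x 1)) * hcq
end
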